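/- arXiv:1905.09969 — 10 statements merged into one kernel-verified Lean document; each statement's English description precedes it below -/
import Mathlib

section
/- If all agents have binary additive valuations (each good valued 0 or 1), then every MMA allocation is also an MMS allocation. That is, if for every agent i, v_i(A_i) ≥ MMS_i(A_{-i}, n-1), then for every agent i, v_i(A_i) ≥ MMS_i(M, n) = ⌊v_i(M)/n⌋. -/
/-- The maximin share of a (ℕ-valued) valuation `v` over the set `S` among `k` parts:
the maximum, over all partitions of `S` into `k` (possibly empty) parts, of the
minimum value of a part. -/
noncomputable def MMSnat {ι : Type*} [DecidableEq ι] (v : Finset ι → ℕ)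
    (S : Finset ι) (k : ℕ) : ℕ :=
  sSup {t | ∃ π : Fin k → Finset ι,
    (∀ a b : Fin k, a ≠ b → Disjoint (π a) (π b)) ∧
    Finset.univ.biUnion π = S ∧
    t = ⨅ a : Fin k, v (π a)}

/-- Auxiliary: a binary-valued set can be partitioned into `k` parts each of
value at least the floor of the total over `k`. -/
lemma partition_exists_aux {ι : Type*} [DecidableEq ι] (v : ι → ℕ) (hb : ∀ j, v j ≤ 1) :
    ∀ k, 1 ≤ k → ∀ S : Finset ι, ∃ π : Fin k → Finset ι,
      (∀ a b : Fin k, a ≠ b → Disjoint (π a) (π b)) ∧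
      Finset.univ.biUnion π = S ∧
      ∀ a, (∑ j ∈ S, v j) / k ≤ ∑ j ∈ π a, v j := by
  intro k
  induction k with
  | zero => omega
  | succ k ih =>
    intro _ S
    rcases Nat.eq_zero_or_pos k with hk | hk
    · subst hk
      refine ⟨fun _ => S, ?_, ?_, ?_⟩
      · intro a b hab
        have := a.isLt; have := b.isLt
        exact absurd (Fin.ext (by omega)) hab
      · simp
      · intro a; simp
    · set V := ∑ j ∈ S, v j with hV
      set q := V / (k+1) with hq
      classical
      set T := S.filter (fun j => v j = 1) with hT
      have hTone : ∀ j ∈ T, v j = 1 := fun j hj => (Finset.mem_filter.mp hj).2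
      have hTsum : ∑ j ∈ T, v j = T.card := by
        rw [Finset.sum_congr rfl hTone]; simp
      have hTcard : T.card = V := by
        have h0 : ∑ j ∈ S.filter (fun j => ¬ v j = 1), v j = 0 := by
          apply Finset.sum_eq_zero
          intro j hj
          have := hb j
          have := (Finset.mem_filter.mp hj).2
          omega
        have := Finset.sum_filter_add_sum_filter_not S (fun j => v j = 1) v
        rw [← hT] at this
        omega
      have hqT : q ≤ T.card := by
        rw [hTcard]; exact Nat.div_le_self _ _
      obtain ⟨T', hT'sub, hT'card⟩ := Finset.exists_subset_card_eq hqT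
      have hT'S : T' ⊆ S := hT'sub.trans (Finset.filter_subset _ _)
      have hT'sum : ∑ j ∈ T', v j = q := by
        rw [Finset.sum_congr rfl (fun j hj => hTone j (hT'sub hj))]
        simp [hT'card]
      have hsplit : ∑ j ∈ S \ T', v j + q = V := by
        have := Finset.sum_sdiff (f := v) hT'S
        rw [hT'sum] at this
        exact this
      obtain ⟨π, hd, hu, hval⟩ := ih hk (S \ T')
      have hq' : q ≤ (∑ j ∈ S \ T', v j) / k := by
        rw [Nat.le_div_iff_mul_le hk]
        have h1 : q * (k+1) ≤ V := Nat.div_mul_le_self V (k+1)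
        have h2 : q * k + q = q * (k+1) := by ring
        omega
      have hπsub : ∀ a, π a ⊆ S \ T' := by
        intro a
        rw [← hu]
        exact Finset.subset_biUnion_of_mem π (Finset.mem_univ a)
      refine ⟨Fin.cons T' π, ?_, ?_, ?_⟩
      · intro a b hab
        induction a using Fin.cases with
        | zero =>
          induction b using Fin.cases with
          | zero => exact absurd rfl hab
          | succ b' =>
            simp only [Fin.cons_zero, Fin.cons_succ]
            exact Finset.disjoint_of_subset_right (hπsub b') Finset.disjoint_sdiff
        | succ a' =>
          induction b using Fin.cases with
          | zero =>
            simp only [Fin.cons_zero, Fin.cons_succ]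
            exact (Finset.disjoint_of_subset_right (hπsub a') Finset.disjoint_sdiff).symm
          | succ b' =>
            simp only [Fin.cons_succ]
            exact hd a' b' (fun h => hab (congrArg Fin.succ h))
      · have hcons : Finset.univ.biUnion (Fin.cons T' π) = T' ∪ Finset.univ.biUnion π := by
          ext x
          simp [Finset.mem_biUnion, Fin.exists_fin_succ]
        rw [hcons, hu, Finset.union_sdiff_of_subset hT'S]
      · intro a
        refine Fin.cases ?_ ?_ a
        · simp [hT'sum]
        · intro a'
          simp only [Fin.cons_succ]
          exact le_trans hq' (hval a')

/-- For binary additive valuations, `MMSnat` equals the floor of total over `k`. -/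
lemma MMSnat_eq_div {ι : Type*} [DecidableEq ι] (v : ι → ℕ) (hb : ∀ j, v j ≤ 1)
    (S : Finset ι) (k : ℕ) (hk : 1 ≤ k) :
    MMSnat (fun S => ∑ j ∈ S, v j) S k = (∑ j ∈ S, v j) / k := by
  classical
  set V := ∑ j ∈ S, v j with hV
  haveI : Nonempty (Fin k) := ⟨⟨0, hk⟩⟩
  have hub : ∀ t ∈ {t | ∃ π : Fin k → Finset ι,
      (∀ a b : Fin k, a ≠ b → Disjoint (π a) (π b)) ∧
      Finset.univ.biUnion π = S ∧
      t = ⨅ a : Fin k, ∑ j ∈ π a, v j}, t ≤ V / k := by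
    rintro t ⟨π, hd, hu, rfl⟩
    have hsum : ∑ a : Fin k, ∑ j ∈ π a, v j = V := by
      rw [hV, ← hu]
      exact (Finset.sum_biUnion (fun a _ b _ hab => hd a b hab)).symm
    set m := ⨅ a : Fin k, ∑ j ∈ π a, v j with hm
    have hmin : ∀ a, m ≤ ∑ j ∈ π a, v j := fun a => ciInf_le (OrderBot.bddBelow _) a
    have hkm : k * m ≤ V := by
      calc k * m = ∑ _a : Fin k, m := by simp [Finset.sum_const, mul_comm]
        _ ≤ ∑ a : Fin k, ∑ j ∈ π a, v j := Finset.sum_le_sum (fun a _ => hmin a)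
        _ = V := hsum
    rw [Nat.le_div_iff_mul_le hk, mul_comm]
    exact hkm
  obtain ⟨π, hd, hu, hval⟩ := partition_exists_aux v hb k hk S
  have hmem : (⨅ a : Fin k, ∑ j ∈ π a, v j) ∈ {t | ∃ π : Fin k → Finset ι,
      (∀ a b : Fin k, a ≠ b → Disjoint (π a) (π b)) ∧
      Finset.univ.biUnion π = S ∧
      t = ⨅ a : Fin k, ∑ j ∈ π a, v j} := ⟨π, hd, hu, rfl⟩
  have hbdd : BddAbove {t | ∃ π : Fin k → Finset ι,
      (∀ a b : Fin k, a ≠ b → Disjoint (π a) (π b)) ∧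
      Finset.univ.biUnion π = S ∧
      t = ⨅ a : Fin k, ∑ j ∈ π a, v j} := ⟨V / k, hub⟩
  apply le_antisymm
  · exact csSup_le ⟨_, hmem⟩ hub
  · calc V / k ≤ ⨅ a : Fin k, ∑ j ∈ π a, v j := le_ciInf hval
      _ ≤ _ := le_csSup hbdd hmem

/-- for binary additive valuations, every MMA allocation is MMS. -/
theorem mma_implies_mms_binary_additive
    {ι : Type*} [DecidableEq ι] (M : Finset ι) (n : ℕ) (hn : 2 ≤ n)
    (v : Fin n → ι → ℕ) (hbin : ∀ i j, v i j ≤ 1)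
    (A : Fin n → Finset ι)
    (hdisj : ∀ a b : Fin n, a ≠ b → Disjoint (A a) (A b))
    (hcover : Finset.univ.biUnion A = M)
    (hMMA : ∀ i : Fin n,
      MMSnat (fun S => ∑ j ∈ S, v i j) (M \ A i) (n - 1) ≤ ∑ j ∈ A i, v i j) :
    ∀ i : Fin n,
      MMSnat (fun S => ∑ j ∈ S, v i j) M n ≤ ∑ j ∈ A i, v i j ∧
      MMSnat (fun S => ∑ j ∈ S, v i j) M n = (∑ j ∈ M, v i j) / n := by
  intro i
  have hb : ∀ j, v i j ≤ 1 := hbin i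
  have hAM : A i ⊆ M := by
    rw [← hcover]
    exact Finset.subset_biUnion_of_mem A (Finset.mem_univ i)
  have heqM : MMSnat (fun S => ∑ j ∈ S, v i j) M n = (∑ j ∈ M, v i j) / n :=
    MMSnat_eq_div (v i) hb M n (by omega)
  have heqC : MMSnat (fun S => ∑ j ∈ S, v i j) (M \ A i) (n - 1)
      = (∑ j ∈ M \ A i, v i j) / (n - 1) :=
    MMSnat_eq_div (v i) hb (M \ A i) (n - 1) (by omega)
  have hMMA' : (∑ j ∈ M \ A i, v i j) / (n - 1) ≤ ∑ j ∈ A i, v i j := by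
    rw [← heqC]; exact hMMA i
  set x := ∑ j ∈ A i, v i j with hx
  set W := ∑ j ∈ M \ A i, v i j with hW
  have hsum : W + x = ∑ j ∈ M, v i j := Finset.sum_sdiff hAM
  refine ⟨?_, heqM⟩
  rw [heqM, ← hsum]
  have h1 : W < (x + 1) * (n - 1) := by
    rw [← Nat.div_lt_iff_lt_mul (by omega : 0 < n - 1)]
    omega
  have h2 : (x + 1) * (n - 1) + (x + 1) = (x + 1) * n := by
    have : (n - 1) + 1 = n := by omega
    rw [← this, Nat.mul_succ, this]
  have h3 : W + x < (x + 1) * n := by omega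
  have := (Nat.div_lt_iff_lt_mul (by omega : 0 < n)).mpr h3
  omega
end

section
/- If all agents have additive valuations, then every proportional (PROP) allocation is an MMA allocation: if v_i(A_i) ≥ v_i(M)/n for all i, then v_i(A_i) ≥ MMS_i(A_{-i}, n-1) for all i. -/
/-- The maximin share of a (real-valued) valuation `v` over the set `S` among `k` parts. -/
noncomputable def MMS {ι : Type*} [DecidableEq ι] (v : Finset ι → ℝ)
    (S : Finset ι) (k : ℕ) : ℝ :=
  sSup {t | ∃ π : Fin k → Finset ι,
    (∀ a b : Fin k, a ≠ b → Disjoint (π a) (π b)) ∧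
    Finset.univ.biUnion π = S ∧
    t = ⨅ a : Fin k, v (π a)}

/-- for additive valuations, every PROP allocation is an MMA allocation. -/
theorem prop_implies_mma_additive
    {ι : Type*} [DecidableEq ι] (M : Finset ι) (n : ℕ) (hn : 2 ≤ n)
    (v : Fin n → ι → ℝ) (hpos : ∀ i j, 0 ≤ v i j)
    (A : Fin n → Finset ι)
    (hdisj : ∀ a b : Fin n, a ≠ b → Disjoint (A a) (A b))
    (hcover : Finset.univ.biUnion A = M)
    (hPROP : ∀ i : Fin n, (∑ j ∈ M, v i j) / n ≤ ∑ j ∈ A i, v i j) :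
    ∀ i : Fin n,
      MMS (fun S => ∑ j ∈ S, v i j) (M \ A i) (n - 1) ≤ ∑ j ∈ A i, v i j := by
  intro i
  have hA : A i ⊆ M := by
    rw [← hcover]; exact Finset.subset_biUnion_of_mem A (Finset.mem_univ i)
  have hnpos : (0 : ℝ) < n := by positivity
  have hM : ∑ j ∈ M, v i j ≤ n * ∑ j ∈ A i, v i j := by
    have := hPROP i
    rw [div_le_iff₀ hnpos] at this
    linarith
  have hAnn : 0 ≤ ∑ j ∈ A i, v i j :=
    Finset.sum_nonneg fun j _ => hpos i j
  apply Real.sSup_le _ hAnn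
  rintro t ⟨π, hπd, hπc, rfl⟩
  set f : Fin (n - 1) → ℝ := fun a => ∑ j ∈ π a, v i j with hf
  have hne : Nonempty (Fin (n - 1)) := ⟨⟨0, by omega⟩⟩
  have hbdd : BddBelow (Set.range f) := Set.Finite.bddBelow (Set.finite_range f)
  have hle : ∀ a, (⨅ b, f b) ≤ f a := fun a => ciInf_le hbdd a
  have hsum : ∑ a, f a = ∑ j ∈ M \ A i, v i j := by
    rw [← hπc, Finset.sum_biUnion]
    exact fun a _ b _ hab => hπd a b hab
  have hcard : ((n - 1 : ℕ) : ℝ) * (⨅ b, f b) ≤ ∑ a, f a := by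
    calc ((n - 1 : ℕ) : ℝ) * (⨅ b, f b)
        = ∑ _a : Fin (n - 1), (⨅ b, f b) := by
          rw [Finset.sum_const, Finset.card_univ, Fintype.card_fin, nsmul_eq_mul]
      _ ≤ ∑ a, f a := Finset.sum_le_sum fun a _ => hle a
  have hsdiff : ∑ j ∈ M \ A i, v i j = (∑ j ∈ M, v i j) - ∑ j ∈ A i, v i j := by
    rw [eq_sub_iff_add_eq, Finset.sum_sdiff hA]
  have hcast : ((n - 1 : ℕ) : ℝ) = (n : ℝ) - 1 := by
    have : 1 ≤ n := by omega
    push_cast [this]; ring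
  have hkey : ((n : ℝ) - 1) * (⨅ b, f b) ≤ ((n : ℝ) - 1) * ∑ j ∈ A i, v i j := by
    rw [← hcast]
    calc ((n - 1 : ℕ) : ℝ) * (⨅ b, f b) ≤ ∑ a, f a := hcard
      _ = (∑ j ∈ M, v i j) - ∑ j ∈ A i, v i j := by rw [hsum, hsdiff]
      _ ≤ ((n - 1 : ℕ) : ℝ) * ∑ j ∈ A i, v i j := by rw [hcast]; linarith
  have hpos1 : (0 : ℝ) < (n : ℝ) - 1 := by
    have : (2 : ℝ) ≤ n := by exact_mod_cast hn
    linarith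
  exact le_of_mul_le_mul_left hkey hpos1
end

section
/- MMA allocations may fail to exist: with n agents (n ≥ 2) and m = kn − 1 goods (k > 1), where every agent values each good at 1 (identical binary additive valuations), no allocation A satisfies v_i(A_i) ≥ MMS_i(A_{-i}, n−1) for all agents i. -/
/-- with n ≥ 2 agents and kn−1 goods (k ≥ 2), all valued at 1 by
everyone (identical binary additive valuations, so v(S) = |S| and
MMS(S, n−1) = ⌊|S|/(n−1)⌋), no allocation is MMA. -/
theorem mma_may_not_exist
    {ι : Type*} [DecidableEq ι] (M : Finset ι) (n k : ℕ)
    (hn : 2 ≤ n) (hk : 2 ≤ k) (hM : M.card = k * n - 1) :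
    ¬ ∃ A : Fin n → Finset ι,
      (∀ a b : Fin n, a ≠ b → Disjoint (A a) (A b)) ∧
      Finset.univ.biUnion A = M ∧
      (∀ i : Fin n, (M.card - (A i).card) / (n - 1) ≤ (A i).card) := by
  rintro ⟨A, hdisj, hunion, hmma⟩
  have hn1 : 0 < n - 1 := by omega
  -- every bundle has at least k goods
  have hbig : ∀ i : Fin n, k ≤ (A i).card := by
    intro i
    by_contra hlt
    push_neg at hlt
    have h1 : k * (n - 1) ≤ M.card - (A i).card := by
      have : (A i).card ≤ k - 1 := by omega
      have hkn : k * (n - 1) + k * 1 = k * n := by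
        rw [← Nat.mul_add]; congr 1; omega
      omega
    have h2 : k ≤ (M.card - (A i).card) / (n - 1) :=
      (Nat.le_div_iff_mul_le hn1).mpr h1
    have := hmma i
    omega
  -- sum of cards equals M.card
  have hsum : ∑ i : Fin n, (A i).card = M.card := by
    rw [← hunion]
    exact (Finset.card_biUnion (fun a _ b _ hab => hdisj a b hab)).symm
  have hge : k * n ≤ ∑ i : Fin n, (A i).card := by
    calc k * n = ∑ _i : Fin n, k := by simp [mul_comm]
    _ ≤ _ := Finset.sum_le_sum fun i _ => hbig i
  have : 1 ≤ k * n := Nat.one_le_iff_ne_zero.mpr (by positivity)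
  omega
end

section
/- If all agents have submodular valuations, then every MMS allocation is an MMA1 allocation: for each agent i there exists a good e ∈ A_{-i} such that v_i(A_i) ≥ MMS_i(A_{-i} \ {e}, n−1). -/
/-- A set function is submodular (decreasing marginals). -/
def Submodular {ι : Type*} [DecidableEq ι] (v : Finset ι → ℝ) : Prop :=
  ∀ S T : Finset ι, ∀ e : ι, S ⊆ T → e ∉ T →
    v (insert e T) - v T ≤ v (insert e S) - v S

lemma union_le_of_neg_marginals {ι : Type*} [DecidableEq ι] (v : Finset ι → ℝ)
    (hsub : Submodular v) (A : Finset ι) :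
    ∀ S : Finset ι, (∀ e ∈ S, e ∉ A ∧ v (insert e A) ≤ v A) → v (A ∪ S) ≤ v A := by
  intro S
  induction S using Finset.induction_on with
  | empty => simp
  | @insert e' S' hx ih =>
    intro h
    have he' := h e' (Finset.mem_insert_self _ _)
    have hrest : ∀ e ∈ S', e ∉ A ∧ v (insert e A) ≤ v A :=
      fun e he => h e (Finset.mem_insert_of_mem he)
    have hne : e' ∉ A ∪ S' := by
      simp only [Finset.mem_union, not_or]
      exact ⟨he'.1, hx⟩
    have hsm := hsub A (A ∪ S') e' Finset.subset_union_left hne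
    rw [Finset.union_insert]
    have hih := ih hrest
    linarith [he'.2]


/-- for submodular valuations, every MMS allocation is MMA1. -/
theorem mms_implies_mma1_submodular
    {ι : Type*} [DecidableEq ι] (M : Finset ι) (n : ℕ) (hn : 2 ≤ n)
    (v : Fin n → Finset ι → ℝ)
    (hnorm : ∀ i, v i ∅ = 0)
    (hmono : ∀ i, ∀ S T : Finset ι, S ⊆ T → v i S ≤ v i T)
    (hsub : ∀ i, Submodular (v i))
    (A : Fin n → Finset ι)
    (hdisj : ∀ a b : Fin n, a ≠ b → Disjoint (A a) (A b))
    (hcover : Finset.univ.biUnion A = M)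
    (hMMS : ∀ i : Fin n, MMS (v i) M n ≤ v i (A i)) :
    ∀ i : Fin n, (M \ A i).Nonempty →
      ∃ e ∈ M \ A i, MMS (v i) ((M \ A i).erase e) (n - 1) ≤ v i (A i) := by
  intro i hne
  have hAiM : A i ⊆ M := by
    rw [← hcover]; exact Finset.subset_biUnion_of_mem A (Finset.mem_univ i)
  have hv0 : (0:ℝ) ≤ v i (A i) := by
    have := hmono i ∅ (A i) (Finset.empty_subset _)
    rw [hnorm i] at this; exact this
  -- choose e maximizing marginal value
  obtain ⟨e, heM, hemax⟩ := Finset.exists_max_image (M \ A i)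
    (fun e => v i (insert e (A i))) hne
  refine ⟨e, heM, ?_⟩
  -- bound the sSup
  apply Real.sSup_le _ hv0
  rintro t ⟨π, hπd, hπc, rfl⟩
  -- extended partition of M into n parts
  set σ : Fin n → Finset ι := fun a =>
    if h : (a : ℕ) < n - 1 then π ⟨a, h⟩ else insert e (A i) with hσ
  have hn1 : n - 1 < n := Nat.sub_lt (by omega) one_pos
  set j : Fin n := ⟨n - 1, hn1⟩ with hj
  have hσj : σ j = insert e (A i) := by simp [hσ, hj]
  have heMA : e ∈ M \ A i := heM
  have heM' : e ∈ M := (Finset.mem_sdiff.mp heM).1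
  have heA : e ∉ A i := (Finset.mem_sdiff.mp heM).2
  -- parts of π are inside (M \ A i).erase e
  have hπsub : ∀ a : Fin (n-1), π a ⊆ (M \ A i).erase e := by
    intro a; rw [← hπc]; exact Finset.subset_biUnion_of_mem π (Finset.mem_univ a)
  have hdisjA : Disjoint ((M \ A i).erase e) (insert e (A i)) := by
    rw [Finset.disjoint_insert_right]
    constructor
    · exact Finset.notMem_erase e _
    · exact Finset.disjoint_of_subset_left (Finset.erase_subset _ _)
        (Finset.sdiff_disjoint)
  have hσdisj : ∀ a b : Fin n, a ≠ b → Disjoint (σ a) (σ b) := by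
    intro a b hab
    by_cases ha : (a : ℕ) < n - 1 <;> by_cases hb : (b : ℕ) < n - 1
    · simp only [hσ, dif_pos ha, dif_pos hb]
      apply hπd
      intro hc
      exact hab (Fin.ext (by simpa using congrArg Fin.val hc))
    · simp only [hσ, dif_pos ha, dif_neg hb]
      exact Finset.disjoint_of_subset_left (hπsub _) hdisjA
    · simp only [hσ, dif_neg ha, dif_pos hb]
      exact (Finset.disjoint_of_subset_left (hπsub _) hdisjA).symm
    · exfalso
      apply hab
      apply Fin.ext
      omega
  have hσcov : Finset.univ.biUnion σ = M := by
    apply Finset.Subset.antisymm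
    · intro x hx
      rw [Finset.mem_biUnion] at hx
      obtain ⟨a, _, hxa⟩ := hx
      by_cases ha : (a : ℕ) < n - 1
      · rw [hσ] at hxa; simp only [dif_pos ha] at hxa
        exact (Finset.mem_sdiff.mp (Finset.mem_of_mem_erase (hπsub _ hxa))).1
      · rw [hσ] at hxa; simp only [dif_neg ha] at hxa
        rcases Finset.mem_insert.mp hxa with h | h
        · rw [h]; exact heM'
        · exact hAiM h
    · intro x hxM
      rw [Finset.mem_biUnion]
      by_cases hxA : x ∈ A i
      · exact ⟨j, Finset.mem_univ _, by rw [hσj]; exact Finset.mem_insert_of_mem hxA⟩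
      by_cases hxe : x = e
      · exact ⟨j, Finset.mem_univ _, by rw [hσj, hxe]; exact Finset.mem_insert_self _ _⟩
      · have : x ∈ (M \ A i).erase e :=
          Finset.mem_erase.mpr ⟨hxe, Finset.mem_sdiff.mpr ⟨hxM, hxA⟩⟩
        rw [← hπc, Finset.mem_biUnion] at this
        obtain ⟨a, _, hxa⟩ := this
        have ha : (a : ℕ) < n - 1 := a.isLt
        refine ⟨⟨a, lt_of_lt_of_le ha hn1.le⟩, Finset.mem_univ _, ?_⟩
        rw [hσ]
        simp only [dif_pos ha]
        convert hxa
    -- end cover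
  -- the extended partition's value is ≤ sSup over (M, n)
  have hbdd : BddAbove {t | ∃ π : Fin n → Finset ι,
      (∀ a b : Fin n, a ≠ b → Disjoint (π a) (π b)) ∧
      Finset.univ.biUnion π = M ∧ t = ⨅ a : Fin n, v i (π a)} := by
    refine ⟨v i M, ?_⟩
    rintro t ⟨ρ, hρd, hρc, rfl⟩
    have hsubM : ρ ⟨0, by omega⟩ ⊆ M := by
      rw [← hρc]
      exact Finset.subset_biUnion_of_mem ρ (Finset.mem_univ _)
    calc (⨅ a : Fin n, v i (ρ a)) ≤ v i (ρ ⟨0, by omega⟩) :=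
          ciInf_le (Finite.bddBelow_range _) _
      _ ≤ v i M := hmono i _ _ hsubM
  have htin : (⨅ a : Fin n, v i (σ a)) ∈ {t | ∃ π : Fin n → Finset ι,
      (∀ a b : Fin n, a ≠ b → Disjoint (π a) (π b)) ∧
      Finset.univ.biUnion π = M ∧ t = ⨅ a : Fin n, v i (π a)} :=
    ⟨σ, hσdisj, hσcov, rfl⟩
  have ht' : (⨅ a : Fin n, v i (σ a)) ≤ v i (A i) :=
    le_trans (le_trans (le_csSup hbdd htin) (le_of_eq rfl)) (hMMS i)
  -- now case split
  by_cases hcase : v i (insert e (A i)) ≤ v i (A i)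
  · -- all marginals nonpositive: v i M ≤ v i (A i)
    have hall : ∀ e' ∈ M \ A i, e' ∉ A i ∧ v i (insert e' (A i)) ≤ v i (A i) := by
      intro e' he'
      exact ⟨(Finset.mem_sdiff.mp he').2, le_trans (hemax e' he') hcase⟩
    have hM : v i M ≤ v i (A i) := by
      have := union_le_of_neg_marginals (v i) (hsub i) (A i) (M \ A i) hall
      rwa [Finset.union_sdiff_of_subset hAiM] at this
    calc (⨅ a : Fin (n-1), v i (π a)) ≤ v i (π ⟨0, by omega⟩) :=
          ciInf_le (Finite.bddBelow_range _) _
      _ ≤ v i M := hmono i _ _ (le_trans (hπsub _)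
          (le_trans (Finset.erase_subset _ _) (Finset.sdiff_subset)))
      _ ≤ v i (A i) := hM
  · push_neg at hcase
    -- inf attained at some index, which cannot be j
    haveI : Nonempty (Fin n) := ⟨⟨0, by omega⟩⟩
    obtain ⟨a, ha⟩ := exists_eq_ciInf_of_finite (f := fun a : Fin n => v i (σ a))
    have haj : (a : ℕ) < n - 1 := by
      by_contra hc
      have : σ a = insert e (A i) := by rw [hσ]; simp [hc]
      rw [this] at ha
      rw [← ha] at ht'
      linarith
    calc (⨅ b : Fin (n-1), v i (π b)) ≤ v i (π ⟨a, haj⟩) :=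
          ciInf_le (Finite.bddBelow_range _) _
      _ = v i (σ a) := by rw [hσ]; simp only [dif_pos haj]
      _ ≤ v i (A i) := by rw [ha]; exact ht'
end

section
/- For binary additive valuations, MMA1 and MMS allocations coincide: an allocation A satisfies (for each agent i, there exists e ∈ A_{-i} with v_i(A_i) ≥ MMS_i(A_{-i}\{e}, n−1)) if and only if v_i(A_i) ≥ ⌊v_i(M)/n⌋ for every agent i. -/
lemma exists_part {ι : Type*} [DecidableEq ι] (v : ι → ℕ) (hbin : ∀ j, v j ≤ 1) :
    ∀ (k : ℕ) (S : Finset ι) (q : ℕ), 1 ≤ k → k * q ≤ ∑ j ∈ S, v j →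
    ∃ π : Fin k → Finset ι,
      (∀ a b : Fin k, a ≠ b → Disjoint (π a) (π b)) ∧
      Finset.univ.biUnion π = S ∧
      ∀ a, q ≤ ∑ j ∈ π a, v j := by
  intro k
  induction k with
  | zero => intro S q h; omega
  | succ k ih =>
    intro S q _ hsum
    rcases Nat.eq_zero_or_pos k with hk0 | hkpos
    · subst hk0
      refine ⟨fun _ => S, ?_, ?_, ?_⟩
      · intro a b hab; exact absurd (Fin.ext (by omega)) hab
      · ext x; simp
      · intro a; simpa using hsum
    · -- pick a subset B of the "ones" of S with card q
      set T : Finset ι := S.filter (fun j => v j = 1) with hT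
      have hTS : T ⊆ S := Finset.filter_subset _ _
      have hsumT : ∑ j ∈ S, v j = T.card := by
        rw [← Finset.sum_filter_add_sum_filter_not S (fun j => v j = 1) v]
        have h1 : ∑ j ∈ T, v j = T.card := by
          rw [Finset.card_eq_sum_ones]
          exact Finset.sum_congr rfl (fun j hj => (Finset.mem_filter.mp hj).2)
        have h2 : ∑ j ∈ S.filter (fun j => ¬ v j = 1), v j = 0 := by
          apply Finset.sum_eq_zero
          intro j hj
          have := hbin j
          have := (Finset.mem_filter.mp hj).2
          omega
        rw [hT] at h1 ⊢
        omega
      have hqT : q ≤ T.card := by nlinarith [hsumT, hsum]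
      obtain ⟨B, hBT, hBcard⟩ := Finset.exists_subset_card_eq hqT
      have hBS : B ⊆ S := hBT.trans hTS
      have hBsum : ∑ j ∈ B, v j = q := by
        rw [← hBcard, Finset.card_eq_sum_ones]
        exact Finset.sum_congr rfl
          (fun j hj => (Finset.mem_filter.mp (hBT hj)).2)
      have hsdiff : ∑ j ∈ S \ B, v j + ∑ j ∈ B, v j = ∑ j ∈ S, v j :=
        Finset.sum_sdiff hBS
      have hrest : k * q ≤ ∑ j ∈ S \ B, v j := by
        have : (k + 1) * q = k * q + q := by ring
        omega
      obtain ⟨π', hd', hu', hq'⟩ := ih (S \ B) q hkpos hrest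
      have hsub' : ∀ a, π' a ⊆ S \ B := by
        intro a x hx
        rw [← hu']
        exact Finset.mem_biUnion.mpr ⟨a, Finset.mem_univ a, hx⟩
      refine ⟨Fin.cons B π', ?_, ?_, ?_⟩
      · intro a b
        induction a using Fin.cases with
        | zero =>
          induction b using Fin.cases with
          | zero => intro hab; exact absurd rfl hab
          | succ b' =>
            intro _
            simp only [Fin.cons_zero, Fin.cons_succ]
            exact Finset.disjoint_sdiff.mono_right (hsub' b')
        | succ a' =>
          induction b using Fin.cases with
          | zero =>
            intro _
            simp only [Fin.cons_zero, Fin.cons_succ]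
            exact (Finset.disjoint_sdiff.mono_right (hsub' a')).symm
          | succ b' =>
            intro hab
            simp only [Fin.cons_succ]
            exact hd' a' b' (fun h => hab (congrArg Fin.succ h))
      · ext x
        simp only [Finset.mem_biUnion, Finset.mem_univ, true_and]
        rw [Fin.exists_fin_succ]
        simp only [Fin.cons_zero, Fin.cons_succ]
        constructor
        · rintro (hx | ⟨a, hx⟩)
          · exact hBS hx
          · exact (Finset.mem_sdiff.mp (hsub' a hx)).1
        · intro hx
          by_cases hxB : x ∈ B
          · exact Or.inl hxB
          · right
            have : x ∈ Finset.univ.biUnion π' := by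
              rw [hu']; exact Finset.mem_sdiff.mpr ⟨hx, hxB⟩
            obtain ⟨a, _, ha⟩ := Finset.mem_biUnion.mp this
            exact ⟨a, ha⟩
      · intro a
        refine Fin.cases ?_ ?_ a
        · simp [hBsum]
        · intro a'; simpa using hq' a'

lemma MMSnat_binary {ι : Type*} [DecidableEq ι] (v : ι → ℕ) (hbin : ∀ j, v j ≤ 1)
    (S : Finset ι) (k : ℕ) (hk : 1 ≤ k) :
    MMSnat (fun S => ∑ j ∈ S, v j) S k = (∑ j ∈ S, v j) / k := by
  have hkpos : 0 < k := hk
  have hne : Nonempty (Fin k) := ⟨⟨0, hkpos⟩⟩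
  have hub : ∀ (π : Fin k → Finset ι),
      (∀ a b : Fin k, a ≠ b → Disjoint (π a) (π b)) →
      Finset.univ.biUnion π = S →
      (⨅ a : Fin k, ∑ j ∈ π a, v j) ≤ (∑ j ∈ S, v j) / k := by
    intro π hd hu
    rw [Nat.le_div_iff_mul_le hkpos]
    have hsum : ∑ a : Fin k, ∑ j ∈ π a, v j = ∑ j ∈ S, v j := by
      rw [← hu, Finset.sum_biUnion]
      intro a _ b _ hab
      exact hd a b hab
    calc (⨅ a : Fin k, ∑ j ∈ π a, v j) * k
        = ∑ _a : Fin k, (⨅ a : Fin k, ∑ j ∈ π a, v j) := by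
          simp [Finset.sum_const, Finset.card_univ, mul_comm]
      _ ≤ ∑ a : Fin k, ∑ j ∈ π a, v j :=
          Finset.sum_le_sum (fun a _ => ciInf_le (OrderBot.bddBelow _) a)
      _ = ∑ j ∈ S, v j := hsum
  apply IsGreatest.csSup_eq
  constructor
  · obtain ⟨π, hd, hu, hq⟩ := exists_part v hbin k S ((∑ j ∈ S, v j) / k) hk
      (by rw [mul_comm]; exact Nat.div_mul_le_self _ _)
    refine ⟨π, hd, hu, ?_⟩
    exact le_antisymm (le_ciInf hq) (hub π hd hu)
  · rintro t ⟨π, hd, hu, rfl⟩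
    exact hub π hd hu

/-- for binary additive valuations, MMA1 and MMS allocations coincide. -/
theorem mma1_iff_mms_binary_additive
    {ι : Type*} [DecidableEq ι] (M : Finset ι) (n : ℕ) (hn : 2 ≤ n)
    (v : Fin n → ι → ℕ) (hbin : ∀ i j, v i j ≤ 1)
    (A : Fin n → Finset ι)
    (hdisj : ∀ a b : Fin n, a ≠ b → Disjoint (A a) (A b))
    (hcover : Finset.univ.biUnion A = M)
    (hne : ∀ i : Fin n, (M \ A i).Nonempty) :
    (∀ i : Fin n, ∃ e ∈ M \ A i,
        MMSnat (fun S => ∑ j ∈ S, v i j) ((M \ A i).erase e) (n - 1)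
          ≤ ∑ j ∈ A i, v i j)
    ↔ (∀ i : Fin n, (∑ j ∈ M, v i j) / n ≤ ∑ j ∈ A i, v i j) := by
  obtain ⟨m, hm, rfl⟩ : ∃ m, 1 ≤ m ∧ n = m + 1 := ⟨n - 1, by omega, by omega⟩
  have hAM : ∀ i : Fin (m + 1), A i ⊆ M := by
    intro i x hx
    rw [← hcover]
    exact Finset.mem_biUnion.mpr ⟨i, Finset.mem_univ i, hx⟩
  have hsplit : ∀ i : Fin (m + 1),
      ∑ j ∈ M \ A i, v i j + ∑ j ∈ A i, v i j = ∑ j ∈ M, v i j :=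
    fun i => Finset.sum_sdiff (hAM i)
  have herase : ∀ (i : Fin (m + 1)) (e : ι), e ∈ M \ A i →
      ∑ j ∈ (M \ A i).erase e, v i j + v i e = ∑ j ∈ M \ A i, v i j :=
    fun i e he => Finset.sum_erase_add _ _ he
  constructor
  · intro h i
    obtain ⟨e, he, hle⟩ := h i
    simp only [Nat.add_sub_cancel] at hle
    rw [MMSnat_binary (v i) (hbin i) _ m hm] at hle
    set s := ∑ j ∈ A i, v i j with hs
    have h1 : ∑ j ∈ (M \ A i).erase e, v i j < (s + 1) * m := by
      have := Nat.lt_succ_of_le hle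
      rwa [Nat.div_lt_iff_lt_mul (by omega : 0 < m)] at this
    have h2 := herase i e he
    have h3 := hsplit i
    have h4 := hbin i e
    rw [Nat.div_le_iff_le_mul_add_pred (by omega : 0 < m + 1)]
    have e1 : (s + 1) * m = m * s + m := by ring
    have e2 : (m + 1) * s = m * s + s := by ring
    omega
  · intro h i
    have hi := h i
    set s := ∑ j ∈ A i, v i j with hs
    set r := ∑ j ∈ M \ A i, v i j with hr
    have h3 := hsplit i
    have hlt : ∑ j ∈ M, v i j < (s + 1) * (m + 1) := by
      have := Nat.lt_succ_of_le hi
      rwa [Nat.div_lt_iff_lt_mul (by omega : 0 < m + 1)] at this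
    have e0 : (s + 1) * (m + 1) = (s + 1) * m + s + 1 := by ring
    have hrle : r ≤ (s + 1) * m := by omega
    have key : ∃ e ∈ M \ A i, ∑ j ∈ (M \ A i).erase e, v i j < (s + 1) * m := by
      rcases lt_or_eq_of_le hrle with hlt' | heq
      · obtain ⟨e, he⟩ := hne i
        refine ⟨e, he, ?_⟩
        have := herase i e he
        omega
      · have hrpos : 0 < r := by
          rw [heq]; exact Nat.mul_pos (Nat.succ_pos s) (by omega)
        have : ∃ e ∈ M \ A i, v i e ≠ 0 := by
          by_contra hcon
          push_neg at hcon
          have : r = 0 := Finset.sum_eq_zero hcon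
          omega
        obtain ⟨e, he, hve⟩ := this
        refine ⟨e, he, ?_⟩
        have := herase i e he
        omega
    obtain ⟨e, he, hlt'⟩ := key
    refine ⟨e, he, ?_⟩
    simp only [Nat.add_sub_cancel]
    rw [MMSnat_binary (v i) (hbin i) _ m hm]
    rw [Nat.div_le_iff_le_mul_add_pred (by omega : 0 < m)]
    have e1 : (s + 1) * m = m * s + m := by ring
    omega
end

section
/- When all agents have the identical submodular valuation v, any leximin n-partition of M (equivalently, any n-partition maximizing the minimum part value, with ties broken leximin) is an MMA1 allocation: for each part A_i, either v(A_i) = v(M), or there exists e ∈ M \ A_i such that v(A_i) ≥ MMS(M \ A_i \ {e}, n−1). -/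
private lemma fin_eq_or_succAbove {m : ℕ} (i j : Fin (m+1)) :
    j = i ∨ ∃ k, j = i.succAbove k := by
  rcases eq_or_ne j i with h | h
  · exact Or.inl h
  · obtain ⟨k, hk⟩ := Fin.exists_succAbove_eq h
    exact Or.inr ⟨k, hk.symm⟩

/-- with one identical normalized monotone submodular valuation for
all n agents, any n-partition of M maximizing the minimum part value (in
particular, a leximin n-partition) is MMA1: each part A_i either has full value
v(M), or there is a good e outside A_i with v(A_i) ≥ MMS(M \ A_i \ {e}, n−1). -/
theorem leximin_is_mma1_identical_submodular
    {ι : Type*} [DecidableEq ι] (M : Finset ι) (n : ℕ) (hn : 2 ≤ n)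
    (v : Finset ι → ℝ)
    (hnorm : v ∅ = 0)
    (hmono : ∀ S T : Finset ι, S ⊆ T → v S ≤ v T)
    (hsub : Submodular v)
    (A : Fin n → Finset ι)
    (hdisj : ∀ a b : Fin n, a ≠ b → Disjoint (A a) (A b))
    (hcover : Finset.univ.biUnion A = M)
    (hmaxmin : ∀ B : Fin n → Finset ι,
      (∀ a b : Fin n, a ≠ b → Disjoint (B a) (B b)) →
      Finset.univ.biUnion B = M →
      (⨅ a : Fin n, v (B a)) ≤ ⨅ a : Fin n, v (A a)) :
    ∀ i : Fin n,
      v (A i) = v M ∨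
      ∃ e ∈ M \ A i, MMS v ((M \ A i).erase e) (n - 1) ≤ v (A i) := by
  -- setup: write n = m + 1
  obtain ⟨m, rfl⟩ : ∃ m, n = m + 1 := ⟨n - 1, by omega⟩
  have hm : 1 ≤ m := by omega
  intro i
  have hAiM : A i ⊆ M := by
    intro x hx
    rw [← hcover]
    exact Finset.mem_biUnion.2 ⟨i, Finset.mem_univ _, hx⟩
  have h0 : (0:ℝ) ≤ v (A i) := by
    rw [← hnorm]; exact hmono _ _ (Finset.empty_subset _)
  by_cases hfull : v (A i) = v M
  · exact Or.inl hfull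
  right
  -- find e with strict marginal gain
  have hlt : v (A i) < v M :=
    lt_of_le_of_ne (hmono _ _ hAiM) hfull
  have hex : ∃ e ∈ M \ A i, v (A i) < v (insert e (A i)) := by
    by_contra hco
    push_neg at hco
    -- then v M ≤ v (A i)
    have key : ∀ S : Finset ι, S ⊆ M \ A i → v (A i ∪ S) ≤ v (A i) := by
      intro S
      induction S using Finset.induction_on with
      | empty => intro _; simp
      | @insert x S hxS ih =>
        intro hsub'
        have hxM : x ∈ M \ A i := hsub' (Finset.mem_insert_self _ _)
        have hS : S ⊆ M \ A i := fun y hy => hsub' (Finset.mem_insert_of_mem hy)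
        have hxnot : x ∉ A i ∪ S := by
          intro hx
          rcases Finset.mem_union.1 hx with h | h
          · exact (Finset.mem_sdiff.1 hxM).2 h
          · exact hxS h
        have := hsub (A i) (A i ∪ S) x (Finset.subset_union_left) hxnot
        have h2 : v (insert x (A i)) - v (A i) ≤ 0 := by
          have := hco x hxM
          linarith
        have : v (insert x (A i ∪ S)) ≤ v (A i ∪ S) := by linarith
        calc v (A i ∪ insert x S) = v (insert x (A i ∪ S)) := by
              rw [Finset.union_insert]
          _ ≤ v (A i ∪ S) := this
          _ ≤ v (A i) := ih hS
    have : v M ≤ v (A i) := by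
      have := key (M \ A i) (le_refl _)
      rwa [Finset.union_sdiff_of_subset hAiM] at this
    linarith
  obtain ⟨e, heM, hegain⟩ := hex
  refine ⟨e, heM, ?_⟩
  have heM' : e ∈ M := (Finset.mem_sdiff.1 heM).1
  have heA : e ∉ A i := (Finset.mem_sdiff.1 heM).2
  -- bound the sSup
  apply Real.sSup_le _ h0
  rintro t ⟨π, hπdisj, hπcov, rfl⟩
  -- note (m+1) - 1 = m
  by_contra hbad
  push_neg at hbad
  have hbdd : BddBelow (Set.range fun a => v (π a)) :=
    (Set.finite_range _).bddBelow
  haveI : Nonempty (Fin ((m+1) - 1)) := by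
    refine ⟨⟨0, ?_⟩⟩; omega
  have hparts : ∀ k, v (A i) < v (π k) := fun k =>
    lt_of_lt_of_le hbad (ciInf_le hbdd k)
  have hπsub : ∀ k, π k ⊆ (M \ A i).erase e := by
    intro k x hx
    rw [← hπcov]
    exact Finset.mem_biUnion.2 ⟨k, Finset.mem_univ _, hx⟩
  -- reindex π over Fin m
  have hmm : (m+1) - 1 = m := by omega
  set π' : Fin m → Finset ι := fun k => π (Fin.cast hmm.symm k) with hπ'
  -- construct the improved partition
  set B : Fin (m+1) → Finset ι := i.insertNth (insert e (A i)) π' with hB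
  have hBi : B i = insert e (A i) := by simp [hB]
  have hBs : ∀ k : Fin m, B (i.succAbove k) = π' k := by
    intro k; simp [hB]
  have hπ'sub : ∀ k, π' k ⊆ (M \ A i).erase e := fun k => hπsub _
  have hBdisj : ∀ a b : Fin (m+1), a ≠ b → Disjoint (B a) (B b) := by
    have haux : ∀ k : Fin m, Disjoint (insert e (A i)) (π' k) := by
      intro k
      refine Finset.disjoint_left.2 fun x hx hx' => ?_
      have hx'' := hπ'sub k hx'
      rcases Finset.mem_insert.1 hx with rfl | hxA
      · exact (Finset.notMem_erase _ _) hx''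
      · exact (Finset.mem_sdiff.1 (Finset.mem_of_mem_erase hx'')).2 hxA
    intro a b hab
    rcases fin_eq_or_succAbove i a with ha | ⟨ka, ha⟩ <;>
      rcases fin_eq_or_succAbove i b with hb | ⟨kb, hb⟩ <;> subst ha <;> subst hb
    · exact absurd rfl hab
    · rw [hBi, hBs]; exact haux kb
    · rw [hBi, hBs]; exact (haux ka).symm
    · rw [hBs, hBs]
      have hkk : ka ≠ kb := by
        intro h; exact hab (by rw [h])
      have : Fin.cast hmm.symm ka ≠ Fin.cast hmm.symm kb := by
        simpa using hkk
      exact hπdisj _ _ this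
  have hBcov : Finset.univ.biUnion B = M := by
    apply Finset.ext
    intro x
    simp only [Finset.mem_biUnion, Finset.mem_univ, true_and]
    constructor
    · rintro ⟨j, hj⟩
      rcases fin_eq_or_succAbove i j with hj' | ⟨k, hj'⟩ <;> subst hj'
      · rw [hBi] at hj
        rcases Finset.mem_insert.1 hj with rfl | h
        · exact heM'
        · exact hAiM h
      · rw [hBs] at hj
        have := hπ'sub k hj
        exact (Finset.mem_sdiff.1 (Finset.mem_of_mem_erase this)).1
    · intro hx
      by_cases hxi : x ∈ insert e (A i)
      · exact ⟨i, by rwa [hBi]⟩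
      · have hxe : x ∈ (M \ A i).erase e := by
          rcases Finset.mem_insert.not.1 hxi with h
          push_neg at h
          exact Finset.mem_erase.2 ⟨h.1, Finset.mem_sdiff.2 ⟨hx, h.2⟩⟩
        rw [← hπcov] at hxe
        obtain ⟨k, _, hk⟩ := Finset.mem_biUnion.1 hxe
        refine ⟨i.succAbove (Fin.cast hmm k), ?_⟩
        rw [hBs]
        simpa [hπ'] using hk
  -- compare minima
  have hle := hmaxmin B hBdisj hBcov
  have hAinf : (⨅ a : Fin (m+1), v (A a)) ≤ v (A i) :=
    ciInf_le ((Set.finite_range _).bddBelow) i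
  obtain ⟨a₀, ha₀⟩ := Finite.exists_min (fun a => v (B a))
  have hBlow : v (A i) < v (B a₀) := by
    rcases fin_eq_or_succAbove i a₀ with ha | ⟨k, ha⟩ <;> subst ha
    · rw [hBi]; exact hegain
    · rw [hBs]; exact hparts _
  have hBinf : v (B a₀) ≤ ⨅ a : Fin (m+1), v (B a) := le_ciInf ha₀
  linarith
end

section
/- If all agents have binary additive valuations, then every EFX allocation is an MMAX allocation: for every agent i and every good e ∈ A_{-i}, v_i(A_i) ≥ MMS_i(A_{-i} \ {e}, n−1). -/
/-!
By EFX, every bundle `A j` is worth at most `V + 1` to agent `i`, where `V = v_i(A_i)`: dropping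
any one good (worth at most `1`) leaves at most `V`. The bundle containing `e` is even worth at most
`V + v_i(e)`. Hence `v_i((M \ A_i) \ {e}) ≤ V + (n - 2)(V + 1) < (n - 1)(V + 1)`, and since an
`(n - 1)`-partition has a part worth at most the average, the maximin share is at most `V`.
-/

open Finset Function

section

variable {ι : Type*} [DecidableEq ι]

theorem MMSnat_sum_le_div (f : ι → ℕ) (S : Finset ι) (k : ℕ) :
    MMSnat (fun T => ∑ g ∈ T, f g) S k ≤ (∑ g ∈ S, f g) / k := by
  refine csSup_le' ?_
  rintro _ ⟨π, hπ, rfl, rfl⟩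
  rcases Nat.eq_zero_or_pos k with rfl | hk
  · simp
  have : Nonempty (Fin k) := ⟨⟨0, hk⟩⟩
  rw [Nat.le_div_iff_mul_le hk, sum_biUnion fun a _ b _ hab => hπ a b hab]
  calc (⨅ a, ∑ g ∈ π a, f g) * k = ∑ _a : Fin k, ⨅ a, ∑ g ∈ π a, f g := by
        rw [sum_const, card_univ, Fintype.card_fin, smul_eq_mul, mul_comm]
    _ ≤ ∑ a, ∑ g ∈ π a, f g := sum_le_sum fun a _ => ciInf_le (OrderBot.bddBelow _) a

theorem sum_le_add_one_of_sum_erase_le {s : Finset ι} {f : ι → ℕ} {V : ℕ}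
    (hf : ∀ x ∈ s, f x ≤ 1) (h : ∀ x ∈ s, ∑ g ∈ s.erase x, f g ≤ V) :
    ∑ g ∈ s, f g ≤ V + 1 := by
  rcases s.eq_empty_or_nonempty with rfl | ⟨x, hx⟩
  · simp
  rw [← add_sum_erase _ _ hx, add_comm]
  exact add_le_add (h x hx) (hf x hx)

theorem sum_sdiff_eq_sum_erase {κ : Type*} [Fintype κ] [DecidableEq κ] {M : Finset ι}
    {A : κ → Finset ι} (hdisj : Pairwise (Disjoint on A)) (hcover : univ.biUnion A = M)
    (f : ι → ℕ) (i : κ) :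
    ∑ g ∈ M \ A i, f g = ∑ j ∈ univ.erase i, ∑ g ∈ A j, f g := by
  have hsub : A i ⊆ M := hcover ▸ subset_biUnion_of_mem A (mem_univ i)
  have htotal : ∑ g ∈ M, f g = ∑ j, ∑ g ∈ A j, f g :=
    hcover ▸ sum_biUnion fun a _ b _ hab => hdisj hab
  rw [← add_sum_erase _ _ (mem_univ i), ← sum_sdiff hsub] at htotal
  omega

end

/-- for binary additive valuations, every EFX allocation is MMAX. -/
theorem efx_implies_mmax_binary_additive
    {ι : Type*} [DecidableEq ι] (M : Finset ι) (n : ℕ) (hn : 2 ≤ n)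
    (v : Fin n → ι → ℕ) (hbin : ∀ i j, v i j ≤ 1)
    (A : Fin n → Finset ι)
    (hdisj : ∀ a b : Fin n, a ≠ b → Disjoint (A a) (A b))
    (hcover : Finset.univ.biUnion A = M)
    (hEFX : ∀ i j : Fin n, ∀ e ∈ A j,
      ∑ g ∈ (A j).erase e, v i g ≤ ∑ g ∈ A i, v i g) :
    ∀ i : Fin n, ∀ e ∈ M \ A i,
      MMSnat (fun S => ∑ g ∈ S, v i g) ((M \ A i).erase e) (n - 1)
        ≤ ∑ g ∈ A i, v i g := by
  intro i e he
  obtain ⟨heM, heA⟩ := mem_sdiff.1 he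
  obtain ⟨j₀, -, hej₀⟩ := mem_biUnion.1 (hcover ▸ heM)
  have hj₀ : j₀ ∈ univ.erase i := mem_erase.2 ⟨by rintro rfl; exact heA hej₀, mem_univ _⟩
  set V := ∑ g ∈ A i, v i g
  have hbundle_e : ∑ g ∈ A j₀, v i g ≤ V + v i e := by
    rw [← add_sum_erase _ _ hej₀, add_comm]
    exact Nat.add_le_add_right (hEFX i j₀ e hej₀) _
  have hothers : ∑ j ∈ (univ.erase i).erase j₀, ∑ g ∈ A j, v i g ≤ (n - 2) * (V + 1) := by
    have hcard : #((univ.erase i).erase j₀) = n - 2 := by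
      rw [card_erase_of_mem hj₀, card_erase_of_mem (mem_univ _), card_univ, Fintype.card_fin]
      omega
    calc _ ≤ ∑ _j ∈ (univ.erase i).erase j₀, (V + 1) := sum_le_sum fun j _ =>
          sum_le_add_one_of_sum_erase_le (fun x _ => hbin i x) (hEFX i j)
      _ = (n - 2) * (V + 1) := by rw [sum_const, hcard, smul_eq_mul]
  have hrest : v i e + ∑ g ∈ (M \ A i).erase e, v i g ≤ V + v i e + (n - 2) * (V + 1) := by
    rw [add_sum_erase _ _ he, sum_sdiff_eq_sum_erase (fun a b hab => hdisj a b hab) hcover,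
      ← add_sum_erase _ _ hj₀]
    exact add_le_add hbundle_e hothers
  refine (MMSnat_sum_le_div _ _ _).trans
    (Nat.lt_add_one_iff.1 ((Nat.div_lt_iff_lt_mul (by omega)).2 ?_))
  have hsplit : (V + 1) * (n - 1) = (n - 2) * (V + 1) + (V + 1) := by
    rw [mul_comm, ← Nat.succ_mul]; congr 1; omega
  omega
end

section
/- Key step for EFX ⟹ MMAX under binary additive valuations: in an EFX allocation with x = v_i(A_i), every other bundle A_j satisfies either (v_i(A_j) = x+1 and |A_j| = x+1) or v_i(A_j) ≤ x; consequently either v_i(A_{-i}) ≤ (x+1)(n−1) − 1, or v_i(A_{-i}) = |A_{-i}| = (x+1)(n−1). -/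
/-- key step for EFX ⟹ MMAX under binary additive valuations.
With x = v_i(A_i), every other bundle satisfies either
(v_i(A_j) = x+1 and |A_j| = x+1) or v_i(A_j) ≤ x; consequently either
v_i(A_{-i}) ≤ (x+1)(n−1) − 1, or v_i(A_{-i}) = |A_{-i}| = (x+1)(n−1). -/
theorem efx_binary_bundle_dichotomy
    {ι : Type*} [DecidableEq ι] (M : Finset ι) (n : ℕ) (hn : 2 ≤ n)
    (v : Fin n → ι → ℕ) (hbin : ∀ i j, v i j ≤ 1)
    (A : Fin n → Finset ι)
    (hdisj : ∀ a b : Fin n, a ≠ b → Disjoint (A a) (A b))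
    (hcover : Finset.univ.biUnion A = M)
    (hEFX : ∀ i j : Fin n, ∀ e ∈ A j,
      ∑ g ∈ (A j).erase e, v i g ≤ ∑ g ∈ A i, v i g)
    (i : Fin n) (x : ℕ) (hx : x = ∑ g ∈ A i, v i g) :
    (∀ j : Fin n, j ≠ i →
      ((∑ g ∈ A j, v i g = x + 1 ∧ (A j).card = x + 1) ∨ ∑ g ∈ A j, v i g ≤ x)) ∧
    (∑ g ∈ M \ A i, v i g ≤ (x + 1) * (n - 1) - 1 ∨
      (∑ g ∈ M \ A i, v i g = (M \ A i).card ∧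
        ∑ g ∈ M \ A i, v i g = (x + 1) * (n - 1))) := by
  -- Part 1
  have hle : ∀ j : Fin n, ∑ g ∈ A j, v i g ≤ x + 1 := by
    intro j
    rcases (A j).eq_empty_or_nonempty with h | ⟨e, he⟩
    · simp [h]
    · have := hEFX i j e he
      have h2 : ∑ g ∈ (A j).erase e, v i g + v i e = ∑ g ∈ A j, v i g :=
        Finset.sum_erase_add _ _ he
      have := hbin i e
      omega
  have part1 : ∀ j : Fin n, j ≠ i →
      ((∑ g ∈ A j, v i g = x + 1 ∧ (A j).card = x + 1) ∨ ∑ g ∈ A j, v i g ≤ x) := by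
    intro j _
    by_cases hsum : ∑ g ∈ A j, v i g = x + 1
    · left
      refine ⟨hsum, ?_⟩
      have hcardge : ∑ g ∈ A j, v i g ≤ (A j).card := by
        calc ∑ g ∈ A j, v i g ≤ ∑ _g ∈ A j, 1 := Finset.sum_le_sum (fun g _ => hbin i g)
        _ = (A j).card := by simp
      by_contra hne
      have hgt : x + 1 < (A j).card := by omega
      -- there is a zero-valued element
      have hzero : ∃ e ∈ A j, v i e = 0 := by
        by_contra hz
        push_neg at hz
        have : (A j).card ≤ ∑ g ∈ A j, v i g := by
          calc (A j).card = ∑ _g ∈ A j, 1 := by simp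
          _ ≤ ∑ g ∈ A j, v i g := Finset.sum_le_sum (fun g hg => by
              have := hz g hg; omega)
        omega
      obtain ⟨e, he, hve⟩ := hzero
      have h2 : ∑ g ∈ (A j).erase e, v i g + v i e = ∑ g ∈ A j, v i g :=
        Finset.sum_erase_add _ _ he
      have := hEFX i j e he
      omega
    · right
      have := hle j
      omega
  refine ⟨part1, ?_⟩
  -- Part 2
  set T := (Finset.univ : Finset (Fin n)).erase i with hT
  have hTcard : T.card = n - 1 := by
    simp [hT, Finset.card_erase_of_mem]
  have hset : M \ A i = T.biUnion A := by
    ext g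
    simp only [Finset.mem_sdiff, Finset.mem_biUnion, hT, Finset.mem_erase,
      Finset.mem_univ, and_true]
    constructor
    · rintro ⟨hgM, hgi⟩
      rw [← hcover] at hgM
      simp only [Finset.mem_biUnion, Finset.mem_univ, true_and] at hgM
      obtain ⟨j, hj⟩ := hgM
      exact ⟨j, fun h => hgi (h ▸ hj), hj⟩
    · rintro ⟨j, hji, hgj⟩
      refine ⟨?_, fun hgi => ?_⟩
      · rw [← hcover]
        exact Finset.mem_biUnion.2 ⟨j, Finset.mem_univ j, hgj⟩
      · exact (Finset.disjoint_left.1 (hdisj j i hji)) hgj hgi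
  have hpd : ∀ a ∈ T, ∀ b ∈ T, a ≠ b → Disjoint (A a) (A b) :=
    fun a _ b _ hab => hdisj a b hab
  have hsum : ∑ g ∈ M \ A i, v i g = ∑ j ∈ T, ∑ g ∈ A j, v i g := by
    rw [hset, Finset.sum_biUnion hpd]
  have hcard : (M \ A i).card = ∑ j ∈ T, (A j).card := by
    rw [hset, Finset.card_biUnion hpd]
  by_cases hall : ∀ j ∈ T, ∑ g ∈ A j, v i g = x + 1
  · right
    have hc : ∀ j ∈ T, (A j).card = x + 1 := by
      intro j hj
      have hji : j ≠ i := (Finset.mem_erase.1 hj).1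
      rcases part1 j hji with ⟨_, h⟩ | h
      · exact h
      · have := hall j hj; omega
    have h1 : ∑ g ∈ M \ A i, v i g = (x + 1) * (n - 1) := by
      rw [hsum, Finset.sum_congr rfl hall, Finset.sum_const, hTcard, smul_eq_mul,
        Nat.mul_comm]
    refine ⟨?_, h1⟩
    rw [h1, hcard, Finset.sum_congr rfl hc, Finset.sum_const, hTcard, smul_eq_mul,
      Nat.mul_comm]
  · left
    push_neg at hall
    obtain ⟨j0, hj0T, hj0⟩ := hall
    have hj0le : ∑ g ∈ A j0, v i g ≤ x := by
      have := hle j0; omega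
    have hsplit : ∑ j ∈ T, ∑ g ∈ A j, v i g
        = ∑ g ∈ A j0, v i g + ∑ j ∈ T.erase j0, ∑ g ∈ A j, v i g :=
      (Finset.add_sum_erase T _ hj0T).symm
    have hrest : ∑ j ∈ T.erase j0, ∑ g ∈ A j, v i g ≤ (x + 1) * (n - 2) := by
      calc ∑ j ∈ T.erase j0, ∑ g ∈ A j, v i g
          ≤ ∑ _j ∈ T.erase j0, (x + 1) := Finset.sum_le_sum (fun j _ => hle j)
        _ = (T.erase j0).card * (x + 1) := by simp [mul_comm]
        _ = (x + 1) * (n - 2) := by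
            rw [Finset.card_erase_of_mem hj0T, hTcard, Nat.mul_comm]
            congr 1
    have hn2 : (x + 1) * (n - 1) = (x + 1) * (n - 2) + (x + 1) := by
      have : n - 1 = (n - 2) + 1 := by omega
      rw [this, Nat.mul_add, Nat.mul_one]
    rw [hsum, hsplit]
    omega
end

section
/- Additive MMS capping lemma: for an additive valuation v and set S, if one replaces v(e) by min{v(e), τ} for every e ∈ S, where τ = MMS(S, k), then the maximin share MMS(S, k) is unchanged. -/
/-- capping each good's value at τ = MMS(S,k) does not change the
maximin share of an additive valuation. -/
theorem mms_capping_invariant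
    {ι : Type*} [DecidableEq ι] (S : Finset ι) (k : ℕ) (hk : 1 ≤ k)
    (v : ι → ℝ) (hpos : ∀ j, 0 ≤ v j) :
    MMS (fun T => ∑ e ∈ T, min (v e) (MMS (fun T => ∑ e ∈ T, v e) S k)) S k
      = MMS (fun T => ∑ e ∈ T, v e) S k := by
  classical
  haveI : Nonempty (Fin k) := ⟨⟨0, hk⟩⟩
  set A : (ι → ℝ) → Set ℝ := fun w => {t | ∃ π : Fin k → Finset ι,
    (∀ a b : Fin k, a ≠ b → Disjoint (π a) (π b)) ∧
    Finset.univ.biUnion π = S ∧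
    t = ⨅ a : Fin k, ∑ e ∈ π a, w e} with hA
  have key : ∀ w : ι → ℝ, MMS (fun T => ∑ e ∈ T, w e) S k = sSup (A w) := fun w => rfl
  set τ := MMS (fun T => ∑ e ∈ T, v e) S k with hτdef
  have hτeq : τ = sSup (A v) := key v
  have hsub : ∀ (π : Fin k → Finset ι), Finset.univ.biUnion π = S → ∀ a, π a ⊆ S := by
    intro π hπ a e he
    rw [← hπ]; exact Finset.mem_biUnion.2 ⟨a, Finset.mem_univ a, he⟩
  have hbdd : ∀ (w : ι → ℝ), (∀ j, 0 ≤ w j) → BddAbove (A w) := by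
    intro w hw
    refine ⟨∑ e ∈ S, w e, ?_⟩
    rintro t ⟨π, hdisj, hcov, rfl⟩
    have h1 : (⨅ a : Fin k, ∑ e ∈ π a, w e) ≤ ∑ e ∈ π ⟨0, hk⟩, w e :=
      ciInf_le (Set.Finite.bddBelow (Set.finite_range _)) _
    refine h1.trans (Finset.sum_le_sum_of_subset_of_nonneg (hsub π hcov ⟨0, hk⟩) ?_)
    intro i _ _; exact hw i
  have hnonneg : ∀ (w : ι → ℝ), (∀ j, 0 ≤ w j) → ∀ t ∈ A w, (0:ℝ) ≤ t := by
    rintro w hw t ⟨π, hdisj, hcov, rfl⟩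
    exact le_ciInf fun a => Finset.sum_nonneg fun i _ => hw i
  have hne : ∀ w : ι → ℝ, (A w).Nonempty := by
    intro w
    refine ⟨_, fun a => if a = ⟨0, hk⟩ then S else ∅, ?_, ?_, rfl⟩
    · intro a b hab
      by_cases ha : a = ⟨0, hk⟩ <;> by_cases hb : b = ⟨0, hk⟩
      · exact absurd (ha.trans hb.symm) hab
      · simp [ha, hb]
      · simp [ha, hb]
      · simp [ha, hb]
    · apply Finset.ext; intro e
      simp only [Finset.mem_biUnion, Finset.mem_univ, true_and]
      constructor
      · rintro ⟨a, ha⟩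
        split_ifs at ha with h
        · exact ha
        · simp at ha
      · intro he; exact ⟨⟨0, hk⟩, by simp [he]⟩
  have hτ0 : 0 ≤ τ := by
    obtain ⟨t0, ht0⟩ := hne v
    exact le_trans (hnonneg v hpos t0 ht0) (hτeq ▸ le_csSup (hbdd v hpos) ht0)
  have hv'pos : ∀ j, 0 ≤ min (v j) τ := fun j => le_min (hpos j) hτ0
  rw [key]
  apply le_antisymm
  · -- MMS' ≤ τ
    apply csSup_le (hne _)
    rintro t' ⟨π, hdisj, hcov, rfl⟩
    have h1 : (⨅ a : Fin k, ∑ e ∈ π a, min (v e) τ) ≤ ⨅ a : Fin k, ∑ e ∈ π a, v e := by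
      apply ciInf_mono (Set.Finite.bddBelow (Set.finite_range _))
      intro a
      exact Finset.sum_le_sum fun i _ => min_le_left _ _
    exact h1.trans (hτeq ▸ le_csSup (hbdd v hpos) ⟨π, hdisj, hcov, rfl⟩)
  · -- τ ≤ MMS'
    apply le_of_forall_pos_le_add
    intro ε hε
    obtain ⟨t, ht, hlt⟩ := exists_lt_of_lt_csSup (hne v)
      (show τ - ε < sSup (A v) by rw [← hτeq]; linarith)
    obtain ⟨π, hdisj, hcov, rfl⟩ := ht
    have hstep : τ - ε ≤ ⨅ a : Fin k, ∑ e ∈ π a, min (v e) τ := by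
      apply le_ciInf
      intro a
      have hva : τ - ε < ∑ e ∈ π a, v e :=
        lt_of_lt_of_le hlt (ciInf_le (Set.Finite.bddBelow (Set.finite_range _)) a)
      by_cases hcase : ∃ e ∈ π a, τ ≤ v e
      · obtain ⟨e, he, hτe⟩ := hcase
        have hmin : min (v e) τ = τ := min_eq_right hτe
        calc τ - ε ≤ τ := by linarith
          _ = min (v e) τ := hmin.symm
          _ ≤ ∑ e ∈ π a, min (v e) τ :=
              Finset.single_le_sum (fun i _ => hv'pos i) he
      · push_neg at hcase
        have : ∑ e ∈ π a, min (v e) τ = ∑ e ∈ π a, v e :=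
          Finset.sum_congr rfl fun e he => min_eq_left (le_of_lt (hcase e he))
        rw [this]; exact hva.le
    have : τ - ε ≤ sSup (A fun e => min (v e) τ) :=
      hstep.trans (le_csSup (hbdd _ hv'pos) ⟨π, hdisj, hcov, rfl⟩)
    linarith
end

section
/- In Example 3 (n+1 agents, 2n+1 goods, identical additive valuation with n goods worth n each and n+1 goods worth 1 each): every MMA1 allocation gives each agent value at least ⌈n/2⌉. Specifically, if some agent receives value k < n, then removing her favorite remaining good still leaves a maximin share of min{n, n+1−k} among n parts, so MMA1 forces k ≥ n+1−k. -/
/-- in the instance with n+1 agents and 2n+1 goods (n goods worth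
n each and n+1 goods worth 1 each, identical additive valuation), every MMA1
allocation gives each agent value at least ⌈n/2⌉ = (n+1)/2 (in ℕ). -/
theorem mma1_egalitarian_example
    (n : ℕ) (hn : 1 ≤ n)
    (v : Fin (2 * n + 1) → ℕ)
    (hv : ∀ j : Fin (2 * n + 1), v j = if (j : ℕ) < n then n else 1)
    (A : Fin (n + 1) → Finset (Fin (2 * n + 1)))
    (hdisj : ∀ a b : Fin (n + 1), a ≠ b → Disjoint (A a) (A b))
    (hcover : Finset.univ.biUnion A = Finset.univ)
    (hMMA1 : ∀ i : Fin (n + 1), ∃ e ∈ Finset.univ \ A i,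
      MMSnat (fun S => ∑ j ∈ S, v j) ((Finset.univ \ A i).erase e) n
        ≤ ∑ j ∈ A i, v j) :
    ∀ i : Fin (n + 1), (n + 1) / 2 ≤ ∑ j ∈ A i, v j := by
  intro i
  set k := ∑ j ∈ A i, v j with hk
  by_cases hkn : n ≤ k
  · omega
  push_neg at hkn
  -- no big goods in A i
  have hnobig : ∀ j ∈ A i, ¬ (j : ℕ) < n := by
    intro j hj hjn
    have h1 : v j ≤ k := Finset.single_le_sum (f := v) (fun _ _ => Nat.zero_le _) hj
    rw [hv j, if_pos hjn] at h1; omega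
  have hkcard : k = (A i).card := by
    rw [hk, Finset.card_eq_sum_ones]
    exact Finset.sum_congr rfl (fun j hj => by rw [hv j, if_neg (hnobig j hj)])
  classical
  set Big : Finset (Fin (2 * n + 1)) := Finset.univ.filter (fun j => (j : ℕ) < n) with hBig
  set Small : Finset (Fin (2 * n + 1)) := Finset.univ.filter (fun j => ¬ (j : ℕ) < n) with hSmall
  have hBigcard : Big.card = n := by
    have : Big = Finset.map (Fin.castLEEmb (by omega : n ≤ 2 * n + 1))
        Finset.univ := by
      ext j
      simp only [hBig, Finset.mem_filter, Finset.mem_univ, true_and, Finset.mem_map,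
        Fin.castLEEmb_apply]
      constructor
      · intro hj; exact ⟨⟨j, hj⟩, rfl⟩
      · rintro ⟨a, rfl⟩; exact a.isLt
    rw [this, Finset.card_map, Finset.card_univ, Fintype.card_fin]
  have hSmallcard : Small.card = n + 1 := by
    have hse : Small = Finset.univ \ Big := by
      ext j
      simp [hSmall, hBig]
    rw [hse, Finset.card_sdiff_of_subset (Finset.subset_univ _), hBigcard, Finset.card_univ,
      Fintype.card_fin]
    omega
  have hAsub : A i ⊆ Small := fun j hj => by
    simp only [hSmall, Finset.mem_filter, Finset.mem_univ, true_and]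
    exact hnobig j hj
  have hremcard : (Small \ A i).card = n + 1 - k := by
    rw [Finset.card_sdiff_of_subset hAsub, hSmallcard, hkcard]
  obtain ⟨e, he, hMMS⟩ := hMMA1 i
  have heA : e ∉ A i := (Finset.mem_sdiff.mp he).2
  set S' := ((Finset.univ : Finset (Fin (2 * n + 1))) \ A i).erase e with hS'
  set m := min n (n + 1 - k) with hm
  haveI : NeZero n := ⟨by omega⟩
  set f : Fin (2 * n + 1) → Fin n := fun j =>
    if h : (j : ℕ) < n then ⟨j, h⟩
    else if h2 : (e : ℕ) < n then ⟨e, h2⟩ else ⟨0, by omega⟩ with hf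
  set π : Fin n → Finset (Fin (2 * n + 1)) := fun a => S'.filter (fun j => f j = a) with hπ
  have hdisjπ : ∀ a b : Fin n, a ≠ b → Disjoint (π a) (π b) := by
    intro a b hab
    rw [Finset.disjoint_left]
    intro j hja hjb
    rw [hπ, Finset.mem_filter] at hja hjb
    exact hab (hja.2 ▸ hjb.2)
  have hunion : Finset.univ.biUnion π = S' := by
    ext j
    simp only [Finset.mem_biUnion, Finset.mem_univ, true_and, hπ, Finset.mem_filter]
    exact ⟨fun ⟨a, hj, _⟩ => hj, fun hj => ⟨f j, hj, rfl⟩⟩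
  -- membership of big goods in S'
  have hmemS' : ∀ j : Fin (2 * n + 1), j ≠ e → j ∉ A i → j ∈ S' := by
    intro j hje hjA
    rw [hS', Finset.mem_erase, Finset.mem_sdiff]
    exact ⟨hje, Finset.mem_univ j, hjA⟩
  have hkey : ∀ a : Fin n, m ≤ ∑ j ∈ π a, v j := by
    intro a
    by_cases heb : (e : ℕ) < n
    · by_cases hae : (a : ℕ) = (e : ℕ)
      · -- the part receiving all small goods
        have hsub : Small \ A i ⊆ π a := by
          intro j hj
          rw [Finset.mem_sdiff, hSmall, Finset.mem_filter] at hj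
          obtain ⟨⟨_, hjs⟩, hjA⟩ := hj
          have hje : j ≠ e := fun h => hjs (h ▸ heb)
          rw [hπ, Finset.mem_filter]
          refine ⟨hmemS' j hje hjA, ?_⟩
          rw [hf]
          simp only [dif_neg hjs, dif_pos heb]
          exact Fin.ext hae.symm
        calc m ≤ n + 1 - k := min_le_right _ _
          _ = ∑ j ∈ Small \ A i, v j := by
              rw [← hremcard, Finset.card_eq_sum_ones]
              refine Finset.sum_congr rfl (fun j hj => ?_)
              rw [Finset.mem_sdiff, hSmall, Finset.mem_filter] at hj
              rw [hv j, if_neg hj.1.2]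
          _ ≤ ∑ j ∈ π a, v j := Finset.sum_le_sum_of_subset hsub
      · -- part a contains the big good a
        have hlt : (a : ℕ) < 2 * n + 1 := by omega
        have hb : (⟨(a : ℕ), hlt⟩ : Fin (2 * n + 1)) ∈ π a := by
          rw [hπ, Finset.mem_filter]
          have hjA : (⟨(a : ℕ), hlt⟩ : Fin (2 * n + 1)) ∉ A i :=
            fun h => hnobig _ h a.isLt
          have hje : (⟨(a : ℕ), hlt⟩ : Fin (2 * n + 1)) ≠ e := by
            intro h
            exact hae (by rw [← h])
          refine ⟨hmemS' _ hje hjA, ?_⟩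
          rw [hf]; simp only [dif_pos a.isLt]
        calc m ≤ n := min_le_left _ _
          _ = v ⟨(a : ℕ), hlt⟩ := by rw [hv, if_pos a.isLt]
          _ ≤ ∑ j ∈ π a, v j :=
            Finset.single_le_sum (f := v) (fun _ _ => Nat.zero_le _) hb
    · -- e is small: every part contains its big good
      have hlt : (a : ℕ) < 2 * n + 1 := by omega
      have hb : (⟨(a : ℕ), hlt⟩ : Fin (2 * n + 1)) ∈ π a := by
        rw [hπ, Finset.mem_filter]
        have hjA : (⟨(a : ℕ), hlt⟩ : Fin (2 * n + 1)) ∉ A i :=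
          fun h => hnobig _ h a.isLt
        have hje : (⟨(a : ℕ), hlt⟩ : Fin (2 * n + 1)) ≠ e := by
          intro h
          apply heb; rw [← h]; exact a.isLt
        refine ⟨hmemS' _ hje hjA, ?_⟩
        rw [hf]; simp only [dif_pos a.isLt]
      calc m ≤ n := min_le_left _ _
        _ = v ⟨(a : ℕ), hlt⟩ := by rw [hv, if_pos a.isLt]
        _ ≤ ∑ j ∈ π a, v j :=
          Finset.single_le_sum (f := v) (fun _ _ => Nat.zero_le _) hb
  -- m ≤ MMSnat ...
  have hmMMS : m ≤ MMSnat (fun S => ∑ j ∈ S, v j) S' n := by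
    have ht : m ≤ ⨅ a : Fin n, ∑ j ∈ π a, v j := le_ciInf hkey
    refine le_trans ht ?_
    apply le_csSup
    · refine ⟨∑ j ∈ S', v j, ?_⟩
      rintro t ⟨π', hd', hu', rfl⟩
      refine le_trans (ciInf_le (OrderBot.bddBelow _) ⟨0, by omega⟩) ?_
      refine Finset.sum_le_sum_of_subset ?_
      rw [← hu']
      exact Finset.subset_biUnion_of_mem π' (Finset.mem_univ _)
    · exact ⟨π, hdisjπ, hunion, rfl⟩
  have : m ≤ k := le_trans hmMMS hMMS
  omega
end
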